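/- arXiv:1610.04137 — 4 statements merged into one kernel-verified Lean document; each statement's English description precedes it below -/
import Mathlib

section
/- Let R be a quasi-Frobenius ring and let f : M → N be a surjective R-linear map between R-modules that is a stable equivalence. Then the kernel of f is a projective R-module and f is a split projection: there exists an R-module isomorphism φ : M ≅ N × ker(f) such that f equals the canonical projection N × ker(f) → N composed with φ. -/
/-- An `R`-linear map factors through a projective `R`-module. -/
def FactorsThroughProjective (R : Type) [Ring R] {M N : Type} [AddCommGroup M] [Module R M]
    [AddCommGroup N] [Module R N] (f : M →ₗ[R] N) : Prop :=
  ∃ (P : Type) (_ : AddCommGroup P) (_ : Module R P) (_ : Module.Projective R P)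
    (a : M →ₗ[R] P) (b : P →ₗ[R] N), b ∘ₗ a = f

/-- An `R`-linear map is a stable equivalence if it becomes an isomorphism in the stable
module category: there is `g` in the other direction such that `g ∘ f - id` and `f ∘ g - id`
each factor through a projective module. -/
def IsStableEquiv (R : Type) [Ring R] {M N : Type} [AddCommGroup M] [Module R M]
    [AddCommGroup N] [Module R N] (f : M →ₗ[R] N) : Prop :=
  ∃ g : N →ₗ[R] M,
    FactorsThroughProjective R (g ∘ₗ f - LinearMap.id) ∧
    FactorsThroughProjective R (f ∘ₗ g - LinearMap.id)

/-- A quasi-Frobenius ring: left and right Noetherian, and injective over itself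
as a left and as a right module. -/
class IsQuasiFrobenius (R : Type) [Ring R] : Prop where
  noetherian_left : IsNoetherianRing R
  noetherian_right : IsNoetherianRing Rᵐᵒᵖ
  selfInjective_left : Module.Injective R R
  selfInjective_right : Module.Injective Rᵐᵒᵖ Rᵐᵒᵖ


/-!
Write `g` for a stable inverse of the surjection `f`. Since `f ∘ g - id` factors as `d ∘ c` through
a projective module, `d` lifts along `f` to some `d'`, and `s := g - d' ∘ c` is a section of `f`;
hence `M ≃ N × ker f` with `f` the first projection. On `ker f` the map `g ∘ f - id` is `-id`, so
the identity of `ker f`, i.e. `-(retraction) ∘ (g ∘ f - id) ∘ inclusion`, factors through a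
projective module, making `ker f` a direct summand of a projective module.
-/

namespace LinearMap

variable {R M N : Type*} [Ring R] [AddCommGroup M] [Module R M] [AddCommGroup N] [Module R N]
  (f : M →ₗ[R] N) (s : N →ₗ[R] M) (hfs : f ∘ₗ s = LinearMap.id)

def projKerOfRightInverse : M →ₗ[R] ker f :=
  (LinearMap.id - s ∘ₗ f).codRestrict (ker f) fun x => by
    simpa [sub_eq_zero] using (LinearMap.congr_fun hfs (f x)).symm

@[simp]
theorem coe_projKerOfRightInverse_apply (x : M) :
    (projKerOfRightInverse f s hfs x : M) = x - s (f x) :=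
  rfl

def equivProdKerOfRightInverse : M ≃ₗ[R] N × ker f :=
  LinearEquiv.ofLinearMap (f.prod (projKerOfRightInverse f s hfs)) (s.coprod (ker f).subtype)
    (by
      have hfs' (n : N) : f (s n) = n := LinearMap.congr_fun hfs n
      ext <;> simp [hfs', show ∀ k : ker f, f k = 0 from fun k => k.2])
    (by ext x; simp)

end LinearMap

namespace FactorsThroughProjective

variable {R : Type} [Ring R] {L M N : Type} [AddCommGroup L] [Module R L] [AddCommGroup M]
  [Module R M] [AddCommGroup N] [Module R N] {f : M →ₗ[R] N}

theorem comp_left (hf : FactorsThroughProjective R f) (u : N →ₗ[R] L) :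
    FactorsThroughProjective R (u ∘ₗ f) := by
  obtain ⟨P, _, _, hP, a, b, rfl⟩ := hf
  exact ⟨P, _, _, hP, a, u ∘ₗ b, rfl⟩

theorem comp_right (hf : FactorsThroughProjective R f) (v : L →ₗ[R] M) :
    FactorsThroughProjective R (f ∘ₗ v) := by
  obtain ⟨P, _, _, hP, a, b, rfl⟩ := hf
  exact ⟨P, _, _, hP, a ∘ₗ v, b, rfl⟩

theorem exists_rightInverse_of_surjective (hf : Function.Surjective f) {g : N →ₗ[R] M}
    (h : FactorsThroughProjective R (f ∘ₗ g - LinearMap.id)) :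
    ∃ s : N →ₗ[R] M, f ∘ₗ s = LinearMap.id := by
  obtain ⟨P, _, _, _, c, d, hdc⟩ := h
  obtain ⟨d', hd'⟩ := Module.projective_lifting_property f d hf
  refine ⟨g - d' ∘ₗ c, ?_⟩
  rw [LinearMap.comp_sub, ← LinearMap.comp_assoc, hd', hdc, sub_sub_cancel]

end FactorsThroughProjective

theorem Module.Projective.of_factorsThroughProjective_id {R : Type} [Ring R] {M : Type}
    [AddCommGroup M] [Module R M] (h : FactorsThroughProjective R (LinearMap.id : M →ₗ[R] M)) :
    Module.Projective R M := by
  obtain ⟨P, _, _, _, a, b, hba⟩ := h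
  exact Module.Projective.of_split a b hba

theorem projective_ker_of_rightInverse {R : Type} [Ring R] {M N : Type} [AddCommGroup M]
    [Module R M] [AddCommGroup N] [Module R N] {f : M →ₗ[R] N} {s : N →ₗ[R] M}
    (hfs : f ∘ₗ s = LinearMap.id) {g : N →ₗ[R] M}
    (h : FactorsThroughProjective R (g ∘ₗ f - LinearMap.id)) :
    Module.Projective R (LinearMap.ker f) := by
  apply Module.Projective.of_factorsThroughProjective_id
  convert (h.comp_right (LinearMap.ker f).subtype).comp_left
    (-LinearMap.projKerOfRightInverse f s hfs)
  ext k
  simp [show f k = 0 from k.2]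

theorem surjective_stableEquiv_split_general (R : Type) [Ring R]
    {M N : Type} [AddCommGroup M] [Module R M] [AddCommGroup N] [Module R N]
    (f : M →ₗ[R] N) (hsurj : Function.Surjective f) (hse : IsStableEquiv R f) :
    Module.Projective R (LinearMap.ker f) ∧
    ∃ φ : M ≃ₗ[R] N × (LinearMap.ker f),
      (LinearMap.fst R N (LinearMap.ker f)) ∘ₗ (φ : M →ₗ[R] N × (LinearMap.ker f)) = f := by
  obtain ⟨g, hgf, hfg⟩ := hse
  obtain ⟨s, hfs⟩ := hfg.exists_rightInverse_of_surjective hsurj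
  exact ⟨projective_ker_of_rightInverse hfs hgf, f.equivProdKerOfRightInverse s hfs, rfl⟩

/-- Over a quasi-Frobenius ring, a surjective stable equivalence has projective kernel and is,
up to isomorphism, the projection from a direct product onto a factor. -/
theorem surjective_stableEquiv_split (R : Type) [Ring R] [IsQuasiFrobenius R]
    {M N : Type} [AddCommGroup M] [Module R M] [AddCommGroup N] [Module R N]
    (f : M →ₗ[R] N) (hsurj : Function.Surjective f) (hse : IsStableEquiv R f) :
    Module.Projective R (LinearMap.ker f) ∧
    ∃ φ : M ≃ₗ[R] N × (LinearMap.ker f),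
      (LinearMap.fst R N (LinearMap.ker f)) ∘ₗ (φ : M →ₗ[R] N × (LinearMap.ker f)) = f :=
  surjective_stableEquiv_split_general R f hsurj hse
end

section
/- Let R be a quasi-Frobenius ring and let f : M → N be an injective R-linear map between R-modules that is a stable equivalence. Then the cokernel of f is an injective (equivalently projective) R-module and f is a split inclusion: there exists an R-module isomorphism ψ : M × coker(f) ≅ N such that f equals ψ composed with the canonical inclusion M → M × coker(f). -/
/-! Over a Noetherian self-injective ring every projective module is injective: a free module is
injective by Baer's criterion, and a projective module is a retract of a free one. So if
`g ∘ f - id` factors through a projective `P`, extending the map `M → P` along `f` corrects `g`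
to a retraction of `f`, and `f` splits. Since `f ∘ g - id` factors through a projective `Q` and
induces `-id` on the cokernel, the cokernel is a retract of `Q`, hence injective. -/

universe u v

theorem Module.Injective.of_leftInverse {R : Type u} [Ring R] {P Q : Type v} [AddCommGroup P]
    [Module R P] [AddCommGroup Q] [Module R Q] [Module.Injective R Q]
    (i : P →ₗ[R] Q) (r : Q →ₗ[R] P) (hri : Function.LeftInverse r i) :
    Module.Injective R P where
  out X Y _ _ _ _ u hu v := by
    obtain ⟨w, hw⟩ := Module.Injective.out (R := R) (Q := Q) u hu (i ∘ₗ v)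
    exact ⟨r ∘ₗ w, fun x => by simp [hw x, hri (v x)]⟩

/-- Over a Noetherian ring, ideals are finitely generated, so a map from an ideal into `ι →₀ Q`
lands in the finitely many coordinates `T`, where `supported Q R T ≃ (T → Q)` is injective. -/
instance Module.Injective.finsupp {R : Type u} [Ring R] [IsNoetherianRing R] {Q ι : Type u}
    [AddCommGroup Q] [Module R Q] [Module.Injective R Q] : Module.Injective R (ι →₀ Q) := by
  refine Module.Baer.injective fun I g => ?_
  obtain ⟨s, hs⟩ : (LinearMap.range g).FG := Module.Finite.iff_fg.mp inferInstance
  set T : Set ι := ⋃ x ∈ (s : Set (ι →₀ Q)), x.support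
  have : Finite T := (s.finite_toSet.biUnion fun x _ => x.support.finite_toSet).to_subtype
  have hg : ∀ x, g x ∈ Finsupp.supported Q R T := fun x =>
    Finsupp.span_le_supported_biUnion_support (R := R) _ (hs ▸ LinearMap.mem_range_self g x)
  have hBaer : Module.Baer R (Finsupp.supported Q R T) :=
    (Module.Baer.of_injective inferInstance).of_equiv
      ((Finsupp.supportedEquivFinsupp T).trans (Finsupp.linearEquivFunOnFinite R Q T)).symm
  obtain ⟨h, hh⟩ := hBaer I (LinearMap.codRestrict _ g hg)
  exact ⟨(Finsupp.supported Q R T).subtype ∘ₗ h, fun x hx => by simp [hh x hx]⟩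

theorem Module.Injective.of_projective {R : Type u} [Ring R] [IsNoetherianRing R]
    [Module.Injective R R] {P : Type u} [AddCommGroup P] [Module R P] [Module.Projective R P] :
    Module.Injective R P :=
  have ⟨s, hs⟩ := Module.Projective.out (R := R) (P := P)
  Module.Injective.of_leftInverse s _ hs

namespace IsQuasiFrobenius

variable (R : Type) [Ring R] [IsQuasiFrobenius R]

instance : IsNoetherianRing R := noetherian_left

instance : Module.Injective R R := selfInjective_left

end IsQuasiFrobenius

section StableEquiv

variable {R : Type} [Ring R] [IsNoetherianRing R] [Module.Injective R R]
  {M N : Type} [AddCommGroup M] [Module R M] [AddCommGroup N] [Module R N]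

theorem exists_leftInverse_of_factorsThroughProjective {f : M →ₗ[R] N} (hf : Function.Injective f)
    {g : N →ₗ[R] M} (h : FactorsThroughProjective R (g ∘ₗ f - LinearMap.id)) :
    ∃ r : N →ₗ[R] M, r ∘ₗ f = LinearMap.id := by
  obtain ⟨P, _, _, _, a, b, hba⟩ := h
  have : Module.Injective R P := .of_projective
  obtain ⟨a', ha'⟩ := Module.Injective.extension_property R P M N f hf a
  refine ⟨g - b ∘ₗ a', ?_⟩
  rw [LinearMap.sub_comp, LinearMap.comp_assoc, ha', hba, sub_sub_cancel]

theorem injective_quotient_range_of_factorsThroughProjective {f : M →ₗ[R] N} {g : N →ₗ[R] M}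
    (h : FactorsThroughProjective R (f ∘ₗ g - LinearMap.id))
    (s : (N ⧸ LinearMap.range f) →ₗ[R] N) (hs : Function.LeftInverse (LinearMap.range f).mkQ s) :
    Module.Injective R (N ⧸ LinearMap.range f) := by
  obtain ⟨Q, _, _, _, c, d, hdc⟩ := h
  have : Module.Injective R Q := .of_projective
  refine .of_leftInverse (c ∘ₗ s) (-((LinearMap.range f).mkQ ∘ₗ d)) fun q => ?_
  have hd : d (c (s q)) = f (g (s q)) - s q := by simpa using LinearMap.congr_fun hdc (s q)
  have hπf : (LinearMap.range f).mkQ (f (g (s q))) = 0 :=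
    (Submodule.Quotient.mk_eq_zero _).mpr (LinearMap.mem_range_self f _)
  simp only [LinearMap.neg_apply, LinearMap.comp_apply, hd, map_sub, hπf, hs q, zero_sub, neg_neg]

end StableEquiv

/-- Over a quasi-Frobenius ring, an injective stable equivalence has injective cokernel and is,
up to isomorphism, the inclusion of a factor into a direct product. -/
theorem injective_stableEquiv_split (R : Type) [Ring R] [IsQuasiFrobenius R]
    {M N : Type} [AddCommGroup M] [Module R M] [AddCommGroup N] [Module R N]
    (f : M →ₗ[R] N) (hinj : Function.Injective f) (hse : IsStableEquiv R f) :
    Module.Injective R (N ⧸ LinearMap.range f) ∧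
    ∃ ψ : (M × (N ⧸ LinearMap.range f)) ≃ₗ[R] N,
      (ψ : M × (N ⧸ LinearMap.range f) →ₗ[R] N) ∘ₗ
        (LinearMap.inl R M (N ⧸ LinearMap.range f)) = f := by
  obtain ⟨g, hgf, hfg⟩ := hse
  obtain ⟨r, hr⟩ := exists_leftInverse_of_factorsThroughProjective hinj hgf
  obtain ⟨e, hfe, hπe⟩ := (LinearMap.exact_map_mkQ_range f).splitInjectiveEquiv
    (LinearMap.range f).mkQ_surjective ⟨r, hr⟩
  refine ⟨injective_quotient_range_of_factorsThroughProjective hfg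
    (e.symm ∘ₗ LinearMap.inr R M _) fun q => ?_, e.symm, hfe.symm⟩
  simp [hπe]
end

section
/- Let C be a finite category (finitely many objects and finitely many morphisms between any two objects) such that every non-identity morphism of C admits a unique factorization as a composite of irreducible morphisms, and suppose there is a function d : Ob(C) → ℕ with d(s) < d(t) for every non-identity morphism s → t. Let Q be the quiver whose vertices are the objects of C and whose arrows are the irreducible morphisms of C. Then the canonical functor from the free path category on Q to C (the identity on objects, sending each arrow to the corresponding irreducible morphism and each path to the composite of its arrows) is an isomorphism of categories. -/
open CategoryTheory

/-- A morphism in a category is an identity (up to `eqToHom`). -/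
def IsIdentityMor {C : Type} [Category.{0} C] {s t : C} (f : s ⟶ t) : Prop :=
  ∃ h : s = t, f = eqToHom h

/-- A morphism is irreducible if it is not an identity and in any factorization `f = g ≫ h`,
one of `g`, `h` is an identity. -/
def IsIrreducibleMor {C : Type} [Category.{0} C] {s t : C} (f : s ⟶ t) : Prop :=
  ¬ IsIdentityMor f ∧
    ∀ (m : C) (g : s ⟶ m) (h : m ⟶ t), f = g ≫ h → IsIdentityMor g ∨ IsIdentityMor h

/-- The vertices of the quiver of irreducible morphisms of a category:
a copy of the objects. -/
structure IrrVertex (C : Type) [Category.{0} C] where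
  obj : C

/-- The quiver whose vertices are the objects of `C` and whose arrows are the irreducible
morphisms of `C`. -/
instance irrQuiver (C : Type) [Category.{0} C] : Quiver.{0} (IrrVertex C) :=
  ⟨fun s t => { f : s.obj ⟶ t.obj // IsIrreducibleMor f }⟩

/-- The canonical functor from the free path category on the quiver of irreducible morphisms
to the category itself: the identity on objects, sending each arrow to the corresponding
irreducible morphism and each path to the composite of its arrows. -/
def irrCanonical (C : Type) [Category.{0} C] : Paths (IrrVertex C) ⥤ C :=
  Paths.lift { obj := fun x => x.obj, map := fun f => f.val }

/-- Composite of a path of irreducible morphisms in `C`. -/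
def composePath {C : Type} [Category.{0} C] {s : IrrVertex C} :
    ∀ {t : IrrVertex C}, Quiver.Path s t → (s.obj ⟶ t.obj)
  | _, Quiver.Path.nil => 𝟙 s.obj
  | _, Quiver.Path.cons p e => composePath p ≫ e.val

/-!
Since every non-identity morphism strictly raises the degree `d`, a non-empty path of irreducible
morphisms never composes to an identity. Hence the empty path is the unique factorization of an
identity, and together with the hypothesis every morphism `s ⟶ t` is the composite of exactly one
path. Composition of paths is thus a bijection on each hom-set, and sending a morphism to its
unique path is a functor inverse to the canonical one.
-/

section

variable {C : Type} [Category.{0} C]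

theorem composePath_comp {a b c : IrrVertex C} (p : Quiver.Path a b) (q : Quiver.Path b c) :
    composePath (p.comp q) = composePath p ≫ composePath q := by
  induction q with
  | nil => exact (Category.comp_id _).symm
  | cons q e ih =>
    change composePath (p.comp q) ≫ e.val = composePath p ≫ composePath q ≫ e.val
    rw [ih, Category.assoc]

theorem irrCanonical_map {a b : IrrVertex C} (p : Quiver.Path a b) :
    (irrCanonical C).map p = composePath p := by
  induction p with
  | nil => rfl
  | cons q e ih =>
    change (irrCanonical C).map q ≫ e.val = composePath q ≫ e.val
    rw [ih]
    rfl

variable {α : Type*} [Preorder α] {d : C → α}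
  (hd : ∀ (s t : C) (f : s ⟶ t), ¬ IsIdentityMor f → d s < d t)
include hd

theorem degree_le_of_path {a b : IrrVertex C} (p : Quiver.Path a b) : d a.obj ≤ d b.obj := by
  induction p with
  | nil => exact le_rfl
  | cons _ e ih => exact ih.trans (hd _ _ e.val e.property.1).le

theorem not_isIdentityMor_composePath_cons {a b c : IrrVertex C} (p : Quiver.Path a b)
    (e : b ⟶ c) : ¬ IsIdentityMor (composePath (p.cons e)) := by
  rintro ⟨hac, -⟩
  have hbc : d b.obj < d c.obj := hd _ _ e.val e.property.1
  exact (degree_le_of_path hd p).not_gt (hac ▸ hbc)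

variable (hfree : ∀ (s t : C) (f : s ⟶ t), ¬ IsIdentityMor f →
      ∃! p : Quiver.Path (IrrVertex.mk s) (IrrVertex.mk t), composePath p = f)
include hfree

theorem existsUnique_composePath_eq {s t : C} (f : s ⟶ t) :
    ∃! p : Quiver.Path (IrrVertex.mk s) (IrrVertex.mk t), composePath p = f := by
  by_cases hf : IsIdentityMor f
  · obtain ⟨rfl, rfl⟩ := hf
    refine ⟨Quiver.Path.nil, rfl, fun p hp => ?_⟩
    cases p with
    | nil => rfl
    | cons p e => exact absurd ⟨rfl, hp⟩ (not_isIdentityMor_composePath_cons hd p e)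
  · exact hfree s t f hf

noncomputable def composePathEquiv (s t : C) :
    Quiver.Path (IrrVertex.mk s) (IrrVertex.mk t) ≃ (s ⟶ t) :=
  Equiv.ofBijective composePath
    ⟨fun _ q hpq => (existsUnique_composePath_eq hd hfree (composePath q)).unique hpq rfl,
      fun f => (existsUnique_composePath_eq hd hfree f).exists⟩

theorem composePath_composePathEquiv_symm {s t : C} (f : s ⟶ t) :
    composePath ((composePathEquiv hd hfree s t).symm f) = f :=
  (composePathEquiv hd hfree s t).apply_symm_apply f

noncomputable def irrCanonicalInv : C ⥤ Paths (IrrVertex C) where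
  obj s := IrrVertex.mk s
  map {s t} := (composePathEquiv hd hfree s t).symm
  map_id s := (Equiv.symm_apply_eq _).2 rfl
  map_comp {s t u} f g := (Equiv.symm_apply_eq _).2 <| Eq.symm <|
    (_root_.composePath_comp ((composePathEquiv hd hfree s t).symm f)
      ((composePathEquiv hd hfree t u).symm g)).trans <| by
        rw [composePath_composePathEquiv_symm, composePath_composePathEquiv_symm]

end

/-- If `C` is a finite category in which every non-identity morphism admits a unique
factorization into irreducible morphisms, and `C` admits a degree function strictly increased
by every non-identity morphism, then the canonical functor from the free path category on the
quiver of irreducible morphisms of `C` to `C` is an isomorphism of categories. -/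
theorem irrCanonical_isIso_of_free (C : Type) [Category.{0} C]
    [Fintype C] [∀ s t : C, Fintype (s ⟶ t)]
    (hfree : ∀ (s t : C) (f : s ⟶ t), ¬ IsIdentityMor f →
      ∃! p : Quiver.Path (IrrVertex.mk s) (IrrVertex.mk t), composePath p = f)
    (d : C → ℕ)
    (hd : ∀ (s t : C) (f : s ⟶ t), ¬ IsIdentityMor f → d s < d t) :
    ∃ G : C ⥤ Paths (IrrVertex C),
      irrCanonical C ⋙ G = 𝟭 (Paths (IrrVertex C)) ∧ G ⋙ irrCanonical C = 𝟭 C := by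
  refine ⟨irrCanonicalInv hd hfree, Functor.hext (fun _ => rfl) fun _ _ p => heq_of_eq ?_,
    Functor.hext (fun _ => rfl) fun _ _ f => heq_of_eq ?_⟩
  · exact (composePathEquiv hd hfree _ _).symm_apply_eq.2 (irrCanonical_map p)
  · exact (irrCanonical_map _).trans (composePath_composePathEquiv_symm hd hfree f)
end

section
/- Let R be a ring, let Q be a finite acyclic quiver, let F be a representation in Rep(Q,R), and fix a vertex j ∈ Q_0. Let D_j denote the category whose objects are the paths in Q of positive length ending at j and whose morphisms from a path p : i → j to a path q : i' → j are the paths r : i → i' with q ∘ r = p. Then the colimit over D_j of the functor sending a path p : i → j to F_i is isomorphic to the direct sum ⊕_{α ∈ Q_1, τ(α)=j} F_{σ(α)} taken over all arrows α with target j. -/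
open CategoryTheory CategoryTheory.Limits

/-- The category of representations of a quiver `V` over a ring `R`:
functors from the free path category on `V` to `R`-modules. -/
abbrev QuivRep (R : Type) [Ring R] (V : Type) [Quiver.{0} V] : Type _ :=
  Paths V ⥤ ModuleCat.{0} R

namespace QuivRep

variable {R : Type} [Ring R] {V : Type} [Quiver.{0} V]

/-- The `R`-module of a representation at a vertex `j`. -/
abbrev vtx (M : QuivRep R V) (j : V) : ModuleCat R := M.obj ((Paths.of V).obj j)

/-- The structure map of a representation along an arrow `a : i ⟶ j`. -/
abbrev arrowMap (M : QuivRep R V) {i j : V} (a : i ⟶ j) : M.vtx i ⟶ M.vtx j :=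
  M.map ((Paths.of V).map a)

/-- The component at a vertex `j` of a morphism of representations. -/
abbrev app {M N : QuivRep R V} (f : M ⟶ N) (j : V) : ↥(M.vtx j) →ₗ[R] ↥(N.vtx j) := (f.app ((Paths.of V).obj j)).hom

/-- A representation is monic if, at each vertex `j`, the natural map
`⊕_{a : i ⟶ j} M_i → M_j`, `(x_a) ↦ Σ_a m_a (x_a)`, is injective. -/
def IsMonic (M : QuivRep R V) : Prop :=
  ∀ j : V,
    letI : DecidableEq (Σ i : V, i ⟶ j) := Classical.decEq _
    Function.Injective
      (DirectSum.toModule R (Σ i : V, i ⟶ j) (M.vtx j)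
        (fun a => ((M.arrowMap a.2).hom : ↥(M.vtx a.1) →ₗ[R] ↥(M.vtx j))))

/-- A representation is RI-fibrant if, at each vertex `j`, the natural map
`M_j → ∏_{a : j ⟶ i} M_i`, `x ↦ (m_a x)_a`, is surjective. -/
def IsRIFibrant (M : QuivRep R V) : Prop :=
  ∀ j : V,
    Function.Surjective
      (LinearMap.pi
        (fun a : Σ i : V, (j ⟶ i) => ((M.arrowMap a.2).hom : ↥(M.vtx j) →ₗ[R] ↥(M.vtx a.1))))

end QuivRep

/-- A quiver is finite and acyclic: finitely many vertices and arrows, and the only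
paths from a vertex to itself are trivial. -/
def IsFiniteAcyclic (V : Type) [Quiver.{0} V] : Prop :=
  Nonempty (Fintype V) ∧ (∀ i j : V, Nonempty (Fintype (i ⟶ j))) ∧
    ∀ (i : V) (p : Quiver.Path i i), p.length = 0

/-- The category of paths of positive length ending at a fixed vertex `j`: an object is a path
`p : i → j` of positive length; a morphism from `p : i → j` to `q : i' → j` is a path
`r : i → i'` with `q ∘ r = p`. -/
structure PathTo (V : Type) [Quiver.{0} V] (j : V) where
  src : V
  path : Quiver.Path src j
  pos : 0 < path.length

instance (V : Type) [Quiver.{0} V] (j : V) : Category (PathTo V j) where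
  Hom p q := { r : Quiver.Path p.src q.src // r.comp q.path = p.path }
  id p := ⟨Quiver.Path.nil, Quiver.Path.nil_comp _⟩
  comp f g := ⟨f.val.comp g.val, by rw [Quiver.Path.comp_assoc, g.prop, f.prop]⟩
  id_comp f := by apply Subtype.ext; exact Quiver.Path.nil_comp _
  comp_id f := by apply Subtype.ext; exact Quiver.Path.comp_nil _
  assoc f g h := by apply Subtype.ext; exact Quiver.Path.comp_assoc _ _ _

/-- The diagram over the category of positive-length paths ending at `j` sending a path
`p : i → j` to `M_i` and a morphism `r` to `M(r)`. -/
noncomputable def pathToDiagram {R : Type} [Ring R] {V : Type} [Quiver.{0} V]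
    (M : QuivRep R V) (j : V) : PathTo V j ⥤ ModuleCat.{0} R where
  obj p := M.vtx p.src
  map {p q} r := M.map (r.val : ((Paths.of V).obj p.src : Paths V) ⟶ (Paths.of V).obj q.src)
  map_id p := M.map_id _
  map_comp f g := M.map_comp _ _

/-!
Every path of positive length ending at `j` factors as a path followed by its last
arrow, so each object of the path category maps to a one-arrow path and the leg of a cocone at
a path `q.cons a` is `M(q)` followed by its leg at `a`. A cocone is therefore the same as a family
of maps out of the `M_{σ(a)}` for the arrows `a` into `j`, with no compatibility condition left:
the colimit is the coproduct of these modules, i.e. their direct sum.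
-/

namespace CategoryTheory.Limits

variable {J C K : Type*} [Category J] [Category C] {F : J ⥤ C}

def isColimitOfLegsFactorThroughCofan (c : Cocone F) (G : K → J) (k : J → K)
    (f : ∀ x, x ⟶ G (k x)) (hf : ∀ x, c.ι.app x = F.map (f x) ≫ c.ι.app (G (k x)))
    (h : IsColimit (Cofan.mk c.pt fun b => c.ι.app (G b))) : IsColimit c where
  desc s := Cofan.IsColimit.desc h fun b => s.ι.app (G b)
  fac s x := by
    rw [hf x, Category.assoc]
    exact (F.map (f x) ≫= Cofan.IsColimit.fac h _ (k x)).trans (s.w (f x))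
  uniq s m hm := Cofan.IsColimit.hom_ext h _ _ fun b =>
    (hm (G b)).trans (Cofan.IsColimit.fac h (fun b => s.ι.app (G b)) b).symm

end CategoryTheory.Limits

namespace PathTo

variable {V : Type} [Quiver.{0} V] {j : V}

def ofArrow (a : Σ i : V, i ⟶ j) : PathTo V j := ⟨a.1, a.2.toPath, Nat.zero_lt_one⟩

def lastArrow : PathTo V j → Σ i : V, i ⟶ j
  | ⟨_, .cons _ a, _⟩ => ⟨_, a⟩

def toOfLastArrow : (p : PathTo V j) → (p ⟶ ofArrow p.lastArrow)
  | ⟨_, .cons q _, _⟩ => ⟨q, rfl⟩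

lemma toOfLastArrow_ofArrow (a : Σ i : V, i ⟶ j) : (ofArrow a).toOfLastArrow = 𝟙 _ := rfl

end PathTo

section

open scoped Classical

variable {R : Type} [Ring R] {V : Type} [Quiver.{0} V]

noncomputable def latchingCocone (M : QuivRep R V) (j : V) : Cocone (pathToDiagram M j) where
  pt := ModuleCat.of R (DirectSum (Σ i : V, i ⟶ j) (fun a => ↥(M.vtx a.1)))
  ι.app p := (pathToDiagram M j).map p.toOfLastArrow ≫
    ModuleCat.ofHom (DirectSum.lof R _ (fun a => ↥(M.vtx a.1)) p.lastArrow)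
  ι.naturality := by
    rintro ⟨i, p, hp⟩ ⟨i', _ | ⟨q, a⟩, hq⟩ r
    · exact absurd hq (lt_irrefl 0)
    · obtain ⟨r, hr⟩ := r
      dsimp only at r hr ⊢
      subst hr
      -- `r.comp (q.cons a)` reduces to `(r.comp q).cons a`, with initial part `r ≫ q`.
      simp only [Functor.const_obj_map]
      exact ((pathToDiagram M j).map_comp_assoc _ _ _).symm

lemma latchingCocone_ι_app_ofArrow (M : QuivRep R V) {j : V} (a : Σ i : V, i ⟶ j) :
    (latchingCocone M j).ι.app (PathTo.ofArrow a) =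
      ModuleCat.ofHom (DirectSum.lof R _ (fun a => ↥(M.vtx a.1)) a) :=
  ((pathToDiagram M j).map_id _ =≫ _).trans (Category.id_comp _)

noncomputable def isColimitLatchingCocone (M : QuivRep R V) (j : V) :
    IsColimit (latchingCocone M j) :=
  isColimitOfLegsFactorThroughCofan _ PathTo.ofArrow PathTo.lastArrow PathTo.toOfLastArrow
    (fun p => by rw [latchingCocone_ι_app_ofArrow]; rfl)
    ((ModuleCat.coproductCoconeIsColimit fun a : Σ i : V, i ⟶ j => M.vtx a.1).ofIsoColimit
      (Cofan.ext (Iso.refl _) fun a =>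
        (Category.comp_id _).trans (latchingCocone_ι_app_ofArrow M a).symm))

end

theorem colimit_pathToDiagram_iso_directSum_general
    (R : Type) [Ring R] {V : Type} [Quiver.{0} V]
    (M : QuivRep R V) (j : V) :
    Nonempty (colimit (pathToDiagram M j) ≅
      ModuleCat.of R (DirectSum (Σ i : V, i ⟶ j) (fun a => ↥(M.vtx a.1)))) :=
  ⟨(colimit.isColimit _).coconePointUniqueUpToIso (isColimitLatchingCocone M j)⟩

/-- For a finite acyclic quiver, the colimit (latching object) of the diagram of positive-length
paths ending at `j` is isomorphic to the direct sum `⊕_{a : i ⟶ j} M_i` over the arrows with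
target `j`. -/
theorem colimit_pathToDiagram_iso_directSum
    (R : Type) [Ring R] {V : Type} [Quiver.{0} V] (hV : IsFiniteAcyclic V)
    (M : QuivRep R V) (j : V) :
    Nonempty (colimit (pathToDiagram M j) ≅
      ModuleCat.of R (DirectSum (Σ i : V, i ⟶ j) (fun a => ↥(M.vtx a.1)))) :=
  colimit_pathToDiagram_iso_directSum_general R M j
end
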